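/- arXiv:1704.07041 — 5 statements merged into one kernel-verified Lean document; each statement's English description precedes it below -/
import Mathlib

section
/- Let G be a group admitting an epimorphism f: G → Γ with kernel K. Suppose every subgroup of finite index in K has finite abelianization (i.e. K has virtual first Betti number zero). Then for every finite index normal subgroup H of G, the kernel of the induced map H₁(H;ℚ) → H₁(f(H);ℚ) is zero, i.e. the restriction f: H → f(H) induces an isomorphism on first rational homology. -/
/-!
Restricting `f` gives a surjection `φ : H → f(H)` whose kernel `H ∩ K` has finite index in `K`.
Abelianization is right exact, so the kernel of `H^ab → f(H)^ab` is the image of `(H ∩ K)^ab`,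
a finite group by hypothesis; tensoring with the flat `ℤ`-module `ℚ` preserves this exactness and
kills finite groups.
-/

open scoped TensorProduct

/-- First rational homology `H₁(G;ℚ)` of a group, i.e. the abelianization tensored with `ℚ`. -/
def H1Q (G : Type*) [Group G] : Type _ :=
  ℚ ⊗[ℤ] (Additive (Abelianization G))

noncomputable instance (G : Type*) [Group G] : AddCommGroup (H1Q G) :=
  inferInstanceAs (AddCommGroup (ℚ ⊗[ℤ] (Additive (Abelianization G))))

noncomputable instance (G : Type*) [Group G] : Module ℚ (H1Q G) :=
  inferInstanceAs (Module ℚ (ℚ ⊗[ℤ] (Additive (Abelianization G))))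

/-- The map `H₁(G;ℚ) → H₁(H;ℚ)` induced by a group homomorphism `f : G → H`. -/
noncomputable def H1QMap {G H : Type*} [Group G] [Group H] (f : G →* H) :
    H1Q G →ₗ[ℤ] H1Q H :=
  LinearMap.lTensor ℚ (MonoidHom.toAdditive (Abelianization.map f)).toIntLinearMap

theorem TensorProduct.subsingleton_of_isAddTorsion {K M : Type*} [DivisionRing K] [CharZero K]
    [AddCommGroup M] (hM : IsAddTorsion M) : Subsingleton (K ⊗[ℤ] M) := by
  refine subsingleton_of_forall_eq 0 fun x => ?_
  induction x using TensorProduct.induction_on with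
  | zero => rfl
  | tmul q m =>
    obtain ⟨n, hn, hnm⟩ := isOfFinAddOrder_iff_nsmul_eq_zero.mp (hM m)
    calc q ⊗ₜ[ℤ] m = ((n : ℤ) • (q / n)) ⊗ₜ[ℤ] m := by
          rw [zsmul_eq_mul, Int.cast_natCast, Nat.cast_comm,
            div_mul_cancel₀ _ (Nat.cast_ne_zero.mpr hn.ne')]
      _ = (q / n) ⊗ₜ[ℤ] ((n : ℤ) • m) := TensorProduct.smul_tmul _ _ _
      _ = 0 := by rw [natCast_zsmul, hnm, TensorProduct.tmul_zero]
  | add a b ha hb => rw [ha, hb, add_zero]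

theorem LinearMap.lTensor_injective_of_isAddTorsion_ker {K M N : Type*} [DivisionRing K]
    [CharZero K] [AddCommGroup M] [AddCommGroup N] (ψ : M →ₗ[ℤ] N)
    (hψ : IsAddTorsion (LinearMap.ker ψ)) :
    Function.Injective (ψ.lTensor K) := by
  have := TensorProduct.subsingleton_of_isAddTorsion (K := K) hψ
  refine (injective_iff_map_eq_zero _).mpr fun x hx => ?_
  obtain ⟨y, rfl⟩ := (Module.Flat.lTensor_exact K (LinearMap.exact_subtype_ker_map ψ) x).mp hx
  rw [Subsingleton.elim y 0, map_zero]

def Subgroup.subgroupOfCommEquiv {G : Type*} [Group G] (A B : Subgroup G) :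
    A.subgroupOf B ≃* B.subgroupOf A where
  toFun x := ⟨⟨x.1, x.2⟩, x.1.2⟩
  invFun x := ⟨⟨x.1, x.2⟩, x.1.2⟩
  left_inv _ := rfl
  right_inv _ := rfl
  map_mul' _ _ := rfl

namespace Abelianization

variable {X Y : Type*} [Group X] [Group Y]

theorem ker_map_of_surjective (φ : X →* Y) (hφ : Function.Surjective φ) :
    (map φ).ker = (map φ.ker.subtype).range := by
  apply le_antisymm
  · -- `X → X^ab ⧸ N` kills `ker φ`, so it factors through `Y`; this splits `map φ` modulo `N`.
    set N := (map φ.ker.subtype).range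
    have hker : φ.ker ≤ ((QuotientGroup.mk' N).comp of).ker := fun x hx =>
      (QuotientGroup.eq_one_iff _).mpr ⟨of ⟨x, hx⟩, rfl⟩
    set ρ := φ.liftOfSurjective hφ ⟨_, hker⟩
    have hρ : (lift ρ).comp (map φ) = QuotientGroup.mk' N := hom_ext _ _ <| by
      ext x
      simp [ρ, MonoidHom.liftOfRightInverse_comp_apply]
    intro a ha
    rw [← QuotientGroup.ker_mk' N, MonoidHom.mem_ker, ← hρ, MonoidHom.comp_apply,
      MonoidHom.mem_ker.mp ha, map_one]
  · rintro _ ⟨a, rfl⟩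
    induction a using QuotientGroup.induction_on with
    | H x =>
      change map φ (map φ.ker.subtype (of x)) = 1
      rw [map_of, map_of, Subgroup.coe_subtype, MonoidHom.mem_ker.mp x.2, map_one]

theorem isOfFinOrder_of_mem_ker_map (φ : X →* Y) (hφ : Function.Surjective φ)
    (htors : IsMulTorsion (Abelianization φ.ker)) {a : Abelianization X} (ha : a ∈ (map φ).ker) :
    IsOfFinOrder a := by
  rw [ker_map_of_surjective φ hφ] at ha
  obtain ⟨b, rfl⟩ := ha
  exact (map _).isOfFinOrder (htors b)

end Abelianization

theorem H1QMap_injective_of_surjective {X Y : Type*} [Group X] [Group Y] (φ : X →* Y)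
    (hφ : Function.Surjective φ) (htors : IsMulTorsion (Abelianization φ.ker)) :
    Function.Injective (H1QMap φ) :=
  LinearMap.lTensor_injective_of_isAddTorsion_ker _ fun x =>
    AddSubmonoid.isOfFinAddOrder_coe.mp <|
      (isOfFinAddOrder_ofMul_iff (G := Abelianization X)).mpr <|
        Abelianization.isOfFinOrder_of_mem_ker_map φ hφ htors (congrArg Additive.toMul x.2)

theorem stmt4_general {G Γ : Type*} [Group G] [Group Γ] (f : G →* Γ)
    (hvb1 : ∀ L : Subgroup f.ker, L.FiniteIndex → Finite (Abelianization L))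
    (H : Subgroup G) (hfi : H.FiniteIndex) :
    Function.Injective (H1QMap (f.subgroupMap H)) := by
  have : Finite (Abelianization (H.subgroupOf f.ker)) := hvb1 _ inferInstance
  let e : (f.subgroupMap H).ker ≃* H.subgroupOf f.ker :=
    (MulEquiv.subgroupCongr (H.ker_subgroupMap f)).trans (f.ker.subgroupOfCommEquiv H)
  have : Finite (Abelianization (f.subgroupMap H).ker) :=
    Finite.of_equiv _ e.abelianizationCongr.symm.toEquiv
  exact H1QMap_injective_of_surjective _ (f.subgroupMap_surjective H) isMulTorsion_of_finite

/-- Let `G` be a group admitting an epimorphism `f : G → Γ` with kernel `K`. Suppose every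
finite index subgroup of `K` has finite abelianization (`K` has virtual first Betti number
zero). Then for every finite index normal subgroup `H` of `G`, the kernel of the induced
map `H₁(H;ℚ) → H₁(f(H);ℚ)` is zero, i.e. the restriction `f : H → f(H)` induces an
injection (hence isomorphism) on first rational homology. -/
theorem stmt4 {G Γ : Type*} [Group G] [Group Γ] (f : G →* Γ)
    (hsurj : Function.Surjective f)
    (hvb1 : ∀ L : Subgroup f.ker, L.FiniteIndex → Finite (Abelianization L))
    (H : Subgroup G) (hn : H.Normal) (hfi : H.FiniteIndex) :
    Function.Injective (H1QMap (f.subgroupMap H)) :=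
  stmt4_general f hvb1 H hfi
end

section
/- Let K be an infinite group with virtual first Betti number zero and Γ a nontrivial surface group. Then the product G = K × Γ is not commensurable to a surface group: there is no finite index subgroup H ≤ G admitting an epimorphism onto a surface group with finite kernel. -/
/-!
Intersecting `H` with `K × 1` gives a finite-index, hence infinite, subgroup `L` of `K` on which
`φ` still has finite kernel, so `φ(L)` is a nontrivial subgroup of a surface group whose
abelianization, a quotient of that of `L`, is finite. This is impossible. Killing the `bᵢ` maps
the surface group of genus `m + 1` onto the free group `F` on the `aᵢ`; its kernel `N` is free on
suitable conjugates of the `bᵢ`, and the surface group embeds into `N ⋊ F` (injectivity comes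
from an explicit retraction). So a nontrivial subgroup either has nontrivial image in `F` or
embeds into `N`; either way it surjects onto a nontrivial free group (Nielsen–Schreier), whose
abelianization is infinite.
-/

/-- The standard surface relator `∏ᵢ [aᵢ, bᵢ]` in the free group on `2g` generators. -/
def surfaceRelator (g : ℕ) : FreeGroup (Fin g × Bool) :=
  (((List.finRange g).map fun i =>
    FreeGroup.of (i, false) * FreeGroup.of (i, true) *
      (FreeGroup.of (i, false))⁻¹ * (FreeGroup.of (i, true))⁻¹)).prod

/-- The fundamental group of the closed orientable surface of genus `g`. -/
def SurfaceGroup (g : ℕ) : Type :=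
  PresentedGroup ({surfaceRelator g} : Set (FreeGroup (Fin g × Bool)))

instance (g : ℕ) : Group (SurfaceGroup g) :=
  inferInstanceAs (Group (PresentedGroup _))

section IntCumProd

variable {G H : Type*} [Group G] [Group H]

def intCumProd (f : ℤ → G) (z : ℤ) : G :=
  if z = 0 then 1
  else if 0 < z then f (z - 1) * intCumProd f (z - 1)
  else (f z)⁻¹ * intCumProd f (z + 1)
termination_by z.natAbs

@[simp] lemma intCumProd_zero (f : ℤ → G) : intCumProd f 0 = 1 := by
  rw [intCumProd, if_pos rfl]

lemma intCumProd_add_one (f : ℤ → G) (z : ℤ) :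
    intCumProd f (z + 1) = f z * intCumProd f z := by
  rcases lt_or_ge z 0 with hz | hz
  · conv_rhs => rw [intCumProd, if_neg hz.ne, if_neg hz.not_gt, mul_inv_cancel_left]
  · rw [intCumProd, if_neg (by omega), if_pos (by omega), add_sub_cancel_right]

lemma eq_intCumProd_mul {f c : ℤ → G} (hc : ∀ z, c (z + 1) = f z * c z) (z : ℤ) :
    c z = intCumProd f z * c 0 := by
  induction z using Int.induction_on with
  | zero => rw [intCumProd_zero, one_mul]
  | succ n ih => rw [hc, ih, intCumProd_add_one, mul_assoc]
  | pred n ih =>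
    have h := hc (-n - 1)
    have hP := intCumProd_add_one f (-n - 1)
    rw [sub_add_cancel] at h hP
    rw [ih, hP, mul_assoc] at h
    exact (mul_left_cancel h).symm

lemma map_intCumProd (φ : G →* H) (f : ℤ → G) (z : ℤ) :
    φ (intCumProd f z) = intCumProd (fun z => φ (f z)) z := by
  simpa using eq_intCumProd_mul (c := fun z => φ (intCumProd f z))
    (fun z => by rw [intCumProd_add_one, map_mul]) z

end IntCumProd

lemma Abelianization.infinite_of_surjective {G H : Type*} [Group G] [Group H] {f : G →* H}
    (hf : Function.Surjective f) [Infinite (Abelianization H)] : Infinite (Abelianization G) :=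
  Infinite.of_surjective (Abelianization.map f) fun y => by
    obtain ⟨y, rfl⟩ := QuotientGroup.mk_surjective y
    obtain ⟨x, rfl⟩ := hf y
    exact ⟨Abelianization.of x, Abelianization.map_of f x⟩

lemma IsFreeGroup.infinite_abelianization (G : Type*) [Group G] [IsFreeGroup G] [Nontrivial G] :
    Infinite (Abelianization G) := by
  have : Nonempty (IsFreeGroup.Generators G) := by
    by_contra! h
    exact not_subsingleton G (IsFreeGroup.toFreeGroup G).toEquiv.subsingleton
  obtain ⟨x⟩ := this
  let deg : G →* Multiplicative ℤ := IsFreeGroup.lift fun _ => .ofAdd 1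
  have hdeg : Function.Surjective deg := fun z =>
    ⟨IsFreeGroup.of x ^ z.toAdd, by simp [deg, ← ofAdd_zsmul]⟩
  have : Infinite (Abelianization (Multiplicative ℤ)) :=
    Infinite.of_injective _ Abelianization.equivOfComm.injective
  exact Abelianization.infinite_of_surjective hdeg

lemma IsFreeGroup.infinite_abelianization_of_range_ne_bot {G Q : Type*} [Group G] [Group Q]
    [IsFreeGroup Q] (f : G →* Q) (hf : f.range ≠ ⊥) : Infinite (Abelianization G) :=
  have : Nontrivial f.range := (Subgroup.nontrivial_iff_ne_bot _).mpr hf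
  have := IsFreeGroup.infinite_abelianization f.range
  Abelianization.infinite_of_surjective f.rangeRestrict_surjective

lemma MonoidHom.range_ne_bot_of_injective {G H : Type*} [Group G] [Group H] [Nontrivial G]
    {f : G →* H} (hf : Function.Injective f) : f.range ≠ ⊥ := by
  obtain ⟨x, hx⟩ := exists_ne (1 : G)
  intro h
  rw [MonoidHom.range_eq_bot_iff] at h
  exact hx (hf (by rw [h, map_one, MonoidHom.one_apply]))

open SemidirectProduct in
theorem infinite_abelianization_of_injective_semidirectProduct {N Q G : Type*} [Group N]
    [Group Q] [Group G] [IsFreeGroup N] [IsFreeGroup Q] [Nontrivial G] {φ : Q →* MulAut N}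
    {f : G →* N ⋊[φ] Q} (hf : Function.Injective f) : Infinite (Abelianization G) := by
  by_cases hQ : (rightHom.comp f).range = ⊥
  · have hN : ∀ x, f x ∈ (inl : N →* N ⋊[φ] Q).range := fun x => by
      rw [range_inl_eq_ker_rightHom, MonoidHom.mem_ker]
      exact DFunLike.congr_fun (MonoidHom.range_eq_bot_iff.mp hQ) x
    let μ : G →* N :=
      (MonoidHom.ofInjective inl_injective).symm.toMonoidHom.comp (f.codRestrict _ hN)
    have hμ : Function.Injective μ :=
      (MonoidHom.ofInjective inl_injective).symm.injective.comp fun x y h =>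
        hf (congrArg Subtype.val h)
    exact IsFreeGroup.infinite_abelianization_of_range_ne_bot μ
      (MonoidHom.range_ne_bot_of_injective hμ)
  · exact IsFreeGroup.infinite_abelianization_of_range_ne_bot _ hQ

instance Subgroup.finiteIndex_comap {G H : Type*} [Group G] [Group H] (K : Subgroup H)
    [K.FiniteIndex] (f : G →* H) : (K.comap f).FiniteIndex :=
  have : K.IsFiniteRelIndex f.range := Subgroup.isFiniteRelIndex_of_finiteIndex
  ⟨by rw [Subgroup.index_comap]; exact Subgroup.relIndex_ne_zero⟩

lemma MonoidHom.finite_ker_comp {G H M : Type*} [Group G] [Group H] [Group M] (φ : H →* M)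
    [Finite φ.ker] {ι : G →* H} (hι : Function.Injective ι) : Finite (φ.comp ι).ker := by
  rw [← MonoidHom.comap_ker]
  exact Finite.of_injective (fun x => (⟨ι x, x.2⟩ : φ.ker)) fun x y h =>
    Subtype.ext (hι (congrArg Subtype.val h))

lemma MonoidHom.range_ne_bot_of_finite_ker {G H : Type*} [Group G] [Group H] [Infinite G]
    (f : G →* H) [Finite f.ker] : f.range ≠ ⊥ := fun h =>
  Infinite.not_finite (f.finite_iff_finite_ker_range.mpr ⟨inferInstance, h ▸ inferInstance⟩)

lemma map_surfaceRelator {G : Type*} [Group G] {g : ℕ} (φ : FreeGroup (Fin g × Bool) →* G) :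
    φ (surfaceRelator g) = (List.ofFn fun i =>
      φ (.of (i, false)) * φ (.of (i, true)) * (φ (.of (i, false)))⁻¹ *
        (φ (.of (i, true)))⁻¹).prod := by
  simp [surfaceRelator, map_list_prod, List.map_map, List.ofFn_eq_map, Function.comp_def]

namespace SurfaceGroup

section Generators

variable {g : ℕ}

def aGen (i : Fin g) : SurfaceGroup g := PresentedGroup.of (i, false)

def bGen (i : Fin g) : SurfaceGroup g := PresentedGroup.of (i, true)

lemma prod_commutator_aGen_bGen :
    (List.ofFn fun i : Fin g => aGen i * bGen i * (aGen i)⁻¹ * (bGen i)⁻¹).prod = 1 := by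
  have h := PresentedGroup.one_of_mem (Set.mem_singleton (surfaceRelator g))
  rwa [map_surfaceRelator] at h

def aHom : FreeGroup (Fin g) →* SurfaceGroup g := FreeGroup.lift aGen

@[simp] lemma aHom_of (i : Fin g) : aHom (.of i) = aGen i := FreeGroup.lift_apply_of

def conjB (i : Fin g) (w : FreeGroup (Fin g)) : SurfaceGroup g := aHom w * bGen i * (aHom w)⁻¹

lemma conjB_mul (i : Fin g) (u w : FreeGroup (Fin g)) :
    conjB i (u * w) = aHom u * conjB i w * (aHom u)⁻¹ := by
  simp only [conjB, map_mul, mul_inv_rev]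
  group

lemma prod_conjB_mul_of (w : FreeGroup (Fin g)) :
    (List.ofFn fun i => conjB i (w * .of i) * (conjB i w)⁻¹).prod = 1 := by
  have h (i : Fin g) : conjB i (w * .of i) * (conjB i w)⁻¹ =
      MulAut.conj (aHom w) (aGen i * bGen i * (aGen i)⁻¹ * (bGen i)⁻¹) := by
    simp only [conjB, map_mul, aHom_of, MulAut.conj_apply]
    group
  simp_rw [h]
  rw [← Function.comp_def (MulAut.conj (aHom w)), ← List.map_ofFn, ← map_list_prod,
    prod_commutator_aGen_bGen, map_one]

end Generators

section Model

variable {m : ℕ}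

open FreeGroup (of)
open SemidirectProduct

variable (m) in
def a0Exp : FreeGroup (Fin (m + 1)) →* Multiplicative ℤ :=
  FreeGroup.lift (Pi.mulSingle 0 (.ofAdd 1))

lemma toAdd_a0Exp_mul_zpow_of_zero (w : FreeGroup (Fin (m + 1))) (z : ℤ) :
    (a0Exp m (w * of 0 ^ z)).toAdd = (a0Exp m w).toAdd + z := by
  simp [a0Exp, ← ofAdd_zsmul]

lemma toAdd_a0Exp_mul_of_zero (w : FreeGroup (Fin (m + 1))) :
    (a0Exp m (w * of 0)).toAdd = (a0Exp m w).toAdd + 1 := by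
  simpa using toAdd_a0Exp_mul_zpow_of_zero w 1

def stripA0 (w : FreeGroup (Fin (m + 1))) : FreeGroup (Fin (m + 1)) :=
  w * of 0 ^ (-(a0Exp m w).toAdd)

lemma stripA0_mem_ker (w : FreeGroup (Fin (m + 1))) : stripA0 w ∈ (a0Exp m).ker := by
  rw [MonoidHom.mem_ker, ← toAdd_eq_zero, stripA0, toAdd_a0Exp_mul_zpow_of_zero, add_neg_cancel]

lemma stripA0_mul_zpow (w : FreeGroup (Fin (m + 1))) :
    stripA0 w * of 0 ^ (a0Exp m w).toAdd = w := by
  rw [stripA0, mul_assoc, ← zpow_add, neg_add_cancel, zpow_zero, mul_one]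

lemma stripA0_mul_of_zero (w : FreeGroup (Fin (m + 1))) : stripA0 (w * of 0) = stripA0 w := by
  rw [stripA0, stripA0, toAdd_a0Exp_mul_of_zero, mul_assoc, ← zpow_one_add]
  congr 2
  ring

lemma stripA0_of_mem_ker {v : FreeGroup (Fin (m + 1))} (hv : v ∈ (a0Exp m).ker) :
    stripA0 v = v := by
  rw [stripA0, hv, toAdd_one, neg_zero, zpow_zero, mul_one]

/-- Models the kernel of `SurfaceGroup (m + 1) → FreeGroup (Fin (m + 1))`, `bᵢ ↦ 1`, free on
the conjugates `w bⱼ w⁻¹` for `j ≠ 0` and all `w`, together with `v b₀ v⁻¹` for `v` of zero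
exponent sum in `a₀`; the relator expresses every other conjugate of `b₀` through these. -/
abbrev KerModel (m : ℕ) : Type :=
  FreeGroup ((Fin m × FreeGroup (Fin (m + 1))) ⊕ (a0Exp m).ker)

def bSucc (j : Fin m) (w : FreeGroup (Fin (m + 1))) : KerModel m := of (.inl (j, w))

def bZeroGen (v : (a0Exp m).ker) : KerModel m := of (.inr v)

-- Models `(w b₀ w⁻¹) (w a₀ b₀ a₀⁻¹ w⁻¹)⁻¹`, by the relator conjugated by `w`.
def bZeroStep (w : FreeGroup (Fin (m + 1))) : KerModel m :=
  (List.ofFn fun j => bSucc j (w * of j.succ) * (bSucc j w)⁻¹).prod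

-- Models `w b₀ w⁻¹`, reached from `v b₀ v⁻¹`, `v = stripA0 w`, by `bZeroStep`s.
def bZero (w : FreeGroup (Fin (m + 1))) : KerModel m :=
  intCumProd (fun z => (bZeroStep (stripA0 w * of 0 ^ z))⁻¹) (a0Exp m w).toAdd *
    bZeroGen ⟨stripA0 w, stripA0_mem_ker w⟩

lemma bZero_mul_of_zero (w : FreeGroup (Fin (m + 1))) :
    bZero (w * of 0) = (bZeroStep w)⁻¹ * bZero w := by
  simp only [bZero, stripA0_mul_of_zero, toAdd_a0Exp_mul_of_zero, intCumProd_add_one,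
    stripA0_mul_zpow, mul_assoc]

lemma bZero_mul_zpow (w : FreeGroup (Fin (m + 1))) (z : ℤ) :
    bZero (w * of 0 ^ z) = intCumProd (fun z => (bZeroStep (w * of 0 ^ z))⁻¹) z * bZero w := by
  have h := eq_intCumProd_mul (c := fun z => bZero (w * of 0 ^ z))
    (fun z => by rw [zpow_add_one, ← mul_assoc, bZero_mul_of_zero]) z
  rwa [zpow_zero, mul_one] at h

lemma bZero_of_mem_ker (v : (a0Exp m).ker) :
    bZero (v : FreeGroup (Fin (m + 1))) = bZeroGen v := by
  simp only [bZero, stripA0_of_mem_ker v.2, MonoidHom.mem_ker.mp v.2, toAdd_one, intCumProd_zero,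
    one_mul, Subtype.coe_eta]

-- Models conjugation by `u` on the kernel.
def translate (u : FreeGroup (Fin (m + 1))) : KerModel m →* KerModel m :=
  FreeGroup.lift <| Sum.elim (fun p => bSucc p.1 (u * p.2))
    (fun v => bZero (u * (v : FreeGroup (Fin (m + 1)))))

@[simp] lemma translate_bSucc (u w : FreeGroup (Fin (m + 1))) (j : Fin m) :
    translate u (bSucc j w) = bSucc j (u * w) := FreeGroup.lift_apply_of

@[simp] lemma translate_bZeroGen (u : FreeGroup (Fin (m + 1))) (v : (a0Exp m).ker) :
    translate u (bZeroGen v) = bZero (u * (v : FreeGroup (Fin (m + 1)))) :=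
  FreeGroup.lift_apply_of

lemma translate_bZeroStep (u w : FreeGroup (Fin (m + 1))) :
    translate u (bZeroStep w) = bZeroStep (u * w) := by
  simp [bZeroStep, map_list_prod, List.map_ofFn, Function.comp_def, mul_assoc]

lemma translate_bZero (u w : FreeGroup (Fin (m + 1))) :
    translate u (bZero w) = bZero (u * w) := by
  rw [bZero, map_mul, map_intCumProd, translate_bZeroGen]
  simp only [map_inv, translate_bZeroStep, ← mul_assoc]
  rw [← bZero_mul_zpow, mul_assoc, stripA0_mul_zpow]

lemma translate_one : translate (1 : FreeGroup (Fin (m + 1))) = MonoidHom.id _ := by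
  ext (⟨j, w⟩ | v)
  · change translate 1 (bSucc j w) = bSucc j w
    rw [translate_bSucc, one_mul]
  · change translate 1 (bZeroGen v) = bZeroGen v
    rw [translate_bZeroGen, one_mul, bZero_of_mem_ker]

lemma translate_mul (u u' : FreeGroup (Fin (m + 1))) :
    translate (u * u') = (translate u).comp (translate u') := by
  ext (⟨j, w⟩ | v)
  · change translate (u * u') (bSucc j w) = translate u (translate u' (bSucc j w))
    simp [mul_assoc]
  · change translate (u * u') (bZeroGen v) = translate u (translate u' (bZeroGen v))
    simp [translate_bZero, mul_assoc]

variable (m) in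
def translateAut : FreeGroup (Fin (m + 1)) →* MulAut (KerModel m) where
  toFun u := (translate u).toMulEquiv (translate u⁻¹)
    (by rw [← translate_mul, inv_mul_cancel, translate_one])
    (by rw [← translate_mul, mul_inv_cancel, translate_one])
  map_one' := MulEquiv.ext fun q => by simp [translate_one]
  map_mul' u u' := MulEquiv.ext fun q => by simp [translate_mul]

abbrev Model (m : ℕ) : Type := KerModel m ⋊[translateAut m] FreeGroup (Fin (m + 1))

def bModel (i : Fin (m + 1)) (w : FreeGroup (Fin (m + 1))) : KerModel m :=
  Fin.cases (bZero w) (fun j => bSucc j w) i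

lemma translate_bModel (u w : FreeGroup (Fin (m + 1))) (i : Fin (m + 1)) :
    translate u (bModel i w) = bModel i (u * w) := by
  cases i using Fin.cases <;> simp [bModel, translate_bZero]

lemma prod_bModel_mul_inv :
    (List.ofFn fun i => bModel i (of i) * (bModel i 1)⁻¹ : List (KerModel m)).prod = 1 := by
  have h := bZero_mul_of_zero (1 : FreeGroup (Fin (m + 1)))
  rw [one_mul] at h
  simp [List.ofFn_succ, bModel, h, bZeroStep]

def toModel : SurfaceGroup (m + 1) →* Model m :=
  PresentedGroup.toGroup (f := fun p => cond p.2 (inl (bModel p.1 1)) (inr (of p.1))) <| by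
    rintro r rfl
    have h (i : Fin (m + 1)) : inr (of i) * inl (bModel i 1) * (inr (of i))⁻¹ *
        (inl (bModel i 1))⁻¹ = (inl (bModel i (of i) * (bModel i 1)⁻¹) : Model m) := by
      rw [← map_inv inr, ← inl_aut, map_mul, map_inv]
      simp [translateAut, translate_bModel]
    simp only [map_surfaceRelator, FreeGroup.lift_apply_of, cond_false, cond_true, h]
    rw [← Function.comp_def inl, ← List.map_ofFn, ← map_list_prod, prod_bModel_mul_inv,
      map_one]

lemma toModel_aGen (i : Fin (m + 1)) : toModel (aGen i) = inr (of i) :=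
  PresentedGroup.toGroup.of _

lemma toModel_bGen (i : Fin (m + 1)) : toModel (bGen i) = inl (bModel i 1) :=
  PresentedGroup.toGroup.of _

def fromKer : KerModel m →* SurfaceGroup (m + 1) :=
  FreeGroup.lift (Sum.elim (fun p => conjB p.1.succ p.2) (fun v => conjB 0 v))

@[simp] lemma fromKer_bSucc (j : Fin m) (w : FreeGroup (Fin (m + 1))) :
    fromKer (bSucc j w) = conjB j.succ w := FreeGroup.lift_apply_of

@[simp] lemma fromKer_bZeroGen (v : (a0Exp m).ker) : fromKer (bZeroGen v) = conjB 0 v :=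
  FreeGroup.lift_apply_of

lemma fromKer_bZeroStep (w : FreeGroup (Fin (m + 1))) :
    fromKer (bZeroStep w) = conjB 0 w * (conjB 0 (w * of 0))⁻¹ := by
  have h := prod_conjB_mul_of w
  rw [List.ofFn_succ, List.prod_cons] at h
  have hstep : fromKer (bZeroStep w) =
      (List.ofFn fun j : Fin m => conjB j.succ (w * of j.succ) * (conjB j.succ w)⁻¹).prod := by
    simp [bZeroStep, map_list_prod, List.map_ofFn, Function.comp_def]
  rw [hstep, eq_inv_of_mul_eq_one_right h, mul_inv_rev, inv_inv]

lemma fromKer_bZero (w : FreeGroup (Fin (m + 1))) : fromKer (bZero w) = conjB 0 w := by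
  have h := eq_intCumProd_mul (c := fun z => conjB 0 (stripA0 w * of 0 ^ z))
    (f := fun z => fromKer (bZeroStep (stripA0 w * of 0 ^ z))⁻¹)
    (fun z => by simp [fromKer_bZeroStep, zpow_add_one, mul_assoc]) (a0Exp m w).toAdd
  rw [stripA0_mul_zpow, zpow_zero, mul_one] at h
  rw [h, bZero, map_mul, map_intCumProd, fromKer_bZeroGen]

lemma fromKer_bModel (i : Fin (m + 1)) (w : FreeGroup (Fin (m + 1))) :
    fromKer (bModel i w) = conjB i w := by
  cases i using Fin.cases <;> simp [bModel, fromKer_bZero]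

lemma fromKer_translate (u : FreeGroup (Fin (m + 1))) :
    fromKer.comp (translateAut m u).toMonoidHom =
      (MulAut.conj (aHom u)).toMonoidHom.comp fromKer := by
  ext (⟨j, w⟩ | v)
  · change fromKer (translate u (bSucc j w)) = MulAut.conj (aHom u) (fromKer (bSucc j w))
    simp [conjB_mul]
  · change fromKer (translate u (bZeroGen v)) = MulAut.conj (aHom u) (fromKer (bZeroGen v))
    simp [fromKer_bZero, conjB_mul]

def fromModel : Model m →* SurfaceGroup (m + 1) :=
  SemidirectProduct.lift fromKer aHom fromKer_translate

lemma fromModel_comp_toModel : (fromModel (m := m)).comp toModel = MonoidHom.id _ := by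
  refine PresentedGroup.ext fun ⟨i, e⟩ => ?_
  cases e
  · change fromModel (toModel (aGen i)) = aGen i
    simp [toModel_aGen, fromModel]
  · change fromModel (toModel (bGen i)) = bGen i
    simp [toModel_bGen, fromModel, fromKer_bModel, conjB]

lemma toModel_injective : Function.Injective (toModel (m := m)) :=
  Function.LeftInverse.injective (g := fromModel) (DFunLike.congr_fun fromModel_comp_toModel)

end Model

instance subsingleton_zero : Subsingleton (SurfaceGroup 0) :=
  (PresentedGroup.mk_surjective _).subsingleton

theorem infinite_abelianization_of_range_ne_bot {G : Type*} [Group G] {g : ℕ}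
    (f : G →* SurfaceGroup g) (hf : f.range ≠ ⊥) : Infinite (Abelianization G) := by
  have : Nontrivial f.range := (Subgroup.nontrivial_iff_ne_bot _).mpr hf
  obtain _ | m := g
  · exact (not_subsingleton f.range inferInstance).elim
  · have := infinite_abelianization_of_injective_semidirectProduct
      (f := toModel.comp f.range.subtype) (toModel_injective.comp f.range.subtype_injective)
    exact Abelianization.infinite_of_surjective f.rangeRestrict_surjective

end SurfaceGroup

theorem stmt5_general {K : Type*} [Group K] [Infinite K]
    (hvb1 : ∀ L : Subgroup K, L.FiniteIndex → Finite (Abelianization L))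
    (g : ℕ) :
    ¬ ∃ (H : Subgroup (K × SurfaceGroup g)) (_ : H.FiniteIndex)
        (g' : ℕ) (_ : 1 ≤ g') (φ : H →* SurfaceGroup g'),
        Function.Surjective φ ∧ Finite φ.ker := by
  rintro ⟨H, hH, g', -, φ, -, hker⟩
  let L := H.comap (MonoidHom.inl K (SurfaceGroup g))
  have : Infinite L := ⟨fun hL => Infinite.not_finite
    ((Subgroup.finite_iff_finite_and_finiteIndex L).mpr ⟨hL, inferInstance⟩)⟩
  let χ : L →* SurfaceGroup g' := φ.comp ((MonoidHom.inl K _).subgroupComap H)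
  have : Finite χ.ker := φ.finite_ker_comp fun x y h =>
    Subtype.ext (Prod.ext_iff.mp (congrArg Subtype.val h)).1
  have := SurfaceGroup.infinite_abelianization_of_range_ne_bot χ χ.range_ne_bot_of_finite_ker
  exact Infinite.not_finite (hvb1 L inferInstance)

/-- Let `K` be an infinite group with virtual first Betti number zero (every finite index
subgroup has finite abelianization) and `Γ` a nontrivial surface group (genus `g ≥ 1`).
Then the product `G = K × Γ` is not commensurable to a surface group: there is no finite
index subgroup `H ≤ G` admitting an epimorphism onto a surface group with finite kernel. -/
theorem stmt5 {K : Type*} [Group K] [Infinite K]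
    (hvb1 : ∀ L : Subgroup K, L.FiniteIndex → Finite (Abelianization L))
    (g : ℕ) (hg : 1 ≤ g) :
    ¬ ∃ (H : Subgroup (K × SurfaceGroup g)) (_ : H.FiniteIndex)
        (g' : ℕ) (_ : 1 ≤ g') (φ : H →* SurfaceGroup g'),
        Function.Surjective φ ∧ Finite φ.ker :=
  stmt5_general hvb1 g
end

section
/- Let G be a RFRS group and f: G → Γ an epimorphism with kernel K. Suppose that for every term Gᵢ of the RFRS filtration, the induced map H₁(Gᵢ;ℚ) → H₁(f(Gᵢ);ℚ) is injective (equivalently an isomorphism). Then f is injective, i.e. K is trivial. -/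
/-! If `ker f ≤ Gᵢ`, an element `k ∈ ker f` maps to `1` in `f(Gᵢ)`, so injectivity on rational
homology forces its class in `H₁(Gᵢ;ℤ)` to be torsion. Since `Gᵢ → Gᵢ/Gᵢ₊₁` factors through
`H₁(Gᵢ;ℤ)/torsion`, this gives `k ∈ Gᵢ₊₁`. By induction `ker f ≤ ⋂ᵢ Gᵢ = 1`. -/

structure IsRFRSFiltration {G : Type*} [Group G] (Gs : ℕ → Subgroup G) : Prop where
  zero_eq_top : Gs 0 = ⊤
  antitone : ∀ i, Gs (i + 1) ≤ Gs i
  normal : ∀ i, (Gs i).Normal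
  finiteIndex : ∀ i, (Gs i).FiniteIndex
  iInf_eq_bot : (⨅ i, Gs i) = ⊥
  factors : ∀ i,
    letI : ((Gs (i + 1)).subgroupOf (Gs i)).Normal := (normal (i + 1)).subgroupOf _
    ∃ β : (Abelianization ↥(Gs i) ⧸ CommGroup.torsion (Abelianization ↥(Gs i))) →*
        (↥(Gs i) ⧸ (Gs (i + 1)).subgroupOf (Gs i)),
      ∀ x : ↥(Gs i),
        β (QuotientGroup.mk (Abelianization.of x)) = QuotientGroup.mk x

def IsRFRS (G : Type*) [Group G] : Prop :=
  ∃ Gs : ℕ → Subgroup G, IsRFRSFiltration Gs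

open scoped TensorProduct

lemma isOfFinAddOrder_of_one_tmul_eq_zero {M : Type*} [AddCommGroup M] {x : M}
    (h : (1 : ℚ) ⊗ₜ[ℤ] x = 0) : IsOfFinAddOrder x := by
  have : IsLocalizedModule (nonZeroDivisors ℤ) (TensorProduct.mk ℤ ℚ M 1) :=
    (isLocalizedModule_iff_isBaseChange _ ℚ _).mpr (TensorProduct.isBaseChange ℤ M ℚ)
  obtain ⟨s, hs⟩ :=
    (IsLocalizedModule.eq_zero_iff (nonZeroDivisors ℤ) (TensorProduct.mk ℤ ℚ M 1)).mp h
  exact isOfFinAddOrder_iff_zsmul_eq_zero.mpr ⟨s, nonZeroDivisors.coe_ne_zero s, hs⟩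

lemma isOfFinOrder_abelianization_of_of_map_eq_one {H K : Type*} [Group H] [Group K]
    {φ : H →* K} (hφ : Function.Injective (H1QMap φ)) {h : H} (hh : φ h = 1) :
    IsOfFinOrder (Abelianization.of h) := by
  have hzero : H1QMap φ ((1 : ℚ) ⊗ₜ[ℤ] Additive.ofMul (Abelianization.of h)) = 0 := by
    change LinearMap.lTensor ℚ _ _ = 0
    rw [LinearMap.lTensor_tmul, AddMonoidHom.coe_toIntLinearMap,
      MonoidHom.toAdditive_apply_apply, toMul_ofMul, Abelianization.map_of, hh, map_one, ofMul_one,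
      TensorProduct.tmul_zero]
  rw [← isOfFinAddOrder_ofMul_iff]
  exact isOfFinAddOrder_of_one_tmul_eq_zero (hφ (hzero.trans (map_zero _).symm))

namespace IsRFRSFiltration

variable {G : Type*} [Group G] {Gs : ℕ → Subgroup G}

lemma mem_succ_of_isOfFinOrder (hGs : IsRFRSFiltration Gs) {i : ℕ} {g : Gs i}
    (hg : IsOfFinOrder (Abelianization.of g)) : (g : G) ∈ Gs (i + 1) := by
  have : ((Gs (i + 1)).subgroupOf (Gs i)).Normal := (hGs.normal (i + 1)).subgroupOf _
  obtain ⟨β, hβ⟩ := hGs.factors i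
  have hg' : (QuotientGroup.mk (Abelianization.of g) :
      Abelianization (Gs i) ⧸ CommGroup.torsion (Abelianization (Gs i))) = 1 :=
    (QuotientGroup.eq_one_iff _).mpr hg
  rw [← Subgroup.mem_subgroupOf, ← QuotientGroup.eq_one_iff, ← hβ, hg', map_one]

lemma eq_bot_of_isOfFinOrder (hGs : IsRFRSFiltration Gs) {N : Subgroup G}
    (hN : ∀ i (g : Gs i), (g : G) ∈ N → IsOfFinOrder (Abelianization.of g)) : N = ⊥ := by
  have hle : ∀ i, N ≤ Gs i := by
    intro i
    induction i with
    | zero => simp [hGs.zero_eq_top]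
    | succ i ih => exact fun g hg ↦ hGs.mem_succ_of_isOfFinOrder (g := ⟨g, ih hg⟩) (hN i _ hg)
  rw [eq_bot_iff, ← hGs.iInf_eq_bot]
  exact le_iInf hle

end IsRFRSFiltration

theorem stmt6_general {G Γ : Type*} [Group G] [Group Γ]
    (Gs : ℕ → Subgroup G) (hGs : IsRFRSFiltration Gs)
    (f : G →* Γ)
    (hinj : ∀ i, Function.Injective (H1QMap (f.subgroupMap (Gs i)))) :
    Function.Injective f := by
  rw [← MonoidHom.ker_eq_bot_iff]
  refine hGs.eq_bot_of_isOfFinOrder fun i g hg ↦ ?_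
  exact isOfFinOrder_abelianization_of_of_map_eq_one (hinj i) (Subtype.ext hg)

/-- Let `G` be a RFRS group and `f : G → Γ` an epimorphism with kernel `K`. Suppose that
for every term `Gᵢ` of the RFRS filtration, the induced map `H₁(Gᵢ;ℚ) → H₁(f(Gᵢ);ℚ)` is
injective (equivalently an isomorphism). Then `f` is injective, i.e. `K` is trivial. -/
theorem stmt6 {G Γ : Type*} [Group G] [Group Γ]
    (Gs : ℕ → Subgroup G) (hGs : IsRFRSFiltration Gs)
    (f : G →* Γ) (hsurj : Function.Surjective f)
    (hinj : ∀ i, Function.Injective (H1QMap (f.subgroupMap (Gs i)))) :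
    Function.Injective f :=
  stmt6_general Gs hGs f hinj
end

section
/- Every subgroup of a RFRS group is RFRS. -/
/-! The maximal torsion-free abelian quotient `K → Kᵃᵇ/torsion` is functorial, so whenever
`L → L/N` factors through it, so does `K → K/φ⁻¹(N)` for every homomorphism `φ : K → L`.
Applied to the inclusions `Gᵢ ∩ H → Gᵢ`, this makes `(Gᵢ ∩ H)ᵢ` an RFRS filtration of `H`. -/

namespace Abelianization

variable {K L : Type*} [Group K] [Group L]

variable (K) in
abbrev toTorsionFree : K →* Abelianization K ⧸ CommGroup.torsion (Abelianization K) :=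
  (QuotientGroup.mk' _).comp of

theorem mem_ker_toTorsionFree {x : K} : x ∈ (toTorsionFree K).ker ↔ IsOfFinOrder (of x) :=
  QuotientGroup.eq_one_iff _

theorem ker_toTorsionFree_le_comap (φ : K →* L) :
    (toTorsionFree K).ker ≤ (toTorsionFree L).ker.comap φ := fun x hx => by
  rw [Subgroup.mem_comap, mem_ker_toTorsionFree, ← map_of]
  exact (map φ).isOfFinOrder (mem_ker_toTorsionFree.mp hx)

def QuotientFactorsThroughTorsionFree (N : Subgroup K) [N.Normal] : Prop :=
  ∃ β : Abelianization K ⧸ CommGroup.torsion (Abelianization K) →* K ⧸ N,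
    ∀ x : K, β (QuotientGroup.mk (of x)) = QuotientGroup.mk x

theorem quotientFactorsThroughTorsionFree_iff (N : Subgroup K) [N.Normal] :
    QuotientFactorsThroughTorsionFree N ↔ (toTorsionFree K).ker ≤ N := by
  constructor
  · rintro ⟨β, hβ⟩ x hx
    rw [← QuotientGroup.eq_one_iff, ← hβ]
    exact (congrArg β hx).trans (map_one β)
  · intro h
    have surj : Function.Surjective (toTorsionFree K) :=
      QuotientGroup.mk_surjective.comp QuotientGroup.mk_surjective
    exact ⟨(toTorsionFree K).liftOfSurjective surj
      ⟨QuotientGroup.mk' N, by rwa [QuotientGroup.ker_mk']⟩,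
      (toTorsionFree K).liftOfRightInverse_comp_apply _ _ _⟩

theorem QuotientFactorsThroughTorsionFree.of_comap_le {φ : K →* L} {N : Subgroup L} [N.Normal]
    {M : Subgroup K} [M.Normal] (hN : QuotientFactorsThroughTorsionFree N) (hNM : N.comap φ ≤ M) :
    QuotientFactorsThroughTorsionFree M := by
  rw [quotientFactorsThroughTorsionFree_iff] at hN ⊢
  exact (ker_toTorsionFree_le_comap φ).trans ((Subgroup.comap_mono hN).trans hNM)

end Abelianization

theorem IsRFRSFiltration.subgroupOf {G : Type*} [Group G] {Gs : ℕ → Subgroup G}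
    (h : IsRFRSFiltration Gs) (H : Subgroup G) :
    IsRFRSFiltration fun i => (Gs i).subgroupOf H where
  zero_eq_top := by rw [h.zero_eq_top, Subgroup.top_subgroupOf]
  antitone i := Subgroup.comap_mono (h.antitone i)
  normal i := (h.normal i).comap _
  finiteIndex i := by have := h.finiteIndex i; infer_instance
  iInf_eq_bot := by
    change (⨅ i, (Gs i).comap H.subtype) = ⊥
    rw [← Subgroup.comap_iInf, h.iInf_eq_bot]
    exact Subgroup.bot_subgroupOf H
  factors i := by
    let ι : (Gs i).subgroupOf H →* Gs i :=
      (H.subtype.comp (Subgroup.subtype _)).codRestrict (Gs i) fun x => x.2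
    have : ((Gs (i + 1)).subgroupOf (Gs i)).Normal := (h.normal (i + 1)).subgroupOf _
    have : (((Gs (i + 1)).subgroupOf H).subgroupOf ((Gs i).subgroupOf H)).Normal :=
      ((h.normal (i + 1)).comap H.subtype).subgroupOf _
    exact Abelianization.QuotientFactorsThroughTorsionFree.of_comap_le (φ := ι) (h.factors i)
      fun _ hx => hx

/-- Every subgroup of a RFRS group is RFRS. -/
theorem stmt9 {G : Type*} [Group G] (hG : IsRFRS G) (H : Subgroup G) :
    IsRFRS H :=
  let ⟨_, h⟩ := hG
  ⟨_, h.subgroupOf H⟩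
end

section
/- Let G be a group with normal subgroup K and quotient Γ = G/K. Suppose the image of H₁(K;ℚ) in H₁(G;ℚ) (the coinvariants map) is nonzero. Then for any finite index normal subgroup H ⊴ G containing K, the kernel of the induced map H₁(H;ℚ) → H₁(H/K;ℚ) is nonzero. -/
open scoped TensorProduct

lemma H1QMap_comp {A B C : Type*} [Group A] [Group B] [Group C] (f : B →* C) (g : A →* B) :
    H1QMap (f.comp g) = (H1QMap f).comp (H1QMap g) := by
  unfold H1QMap
  erw [← LinearMap.lTensor_comp, ← Abelianization.map_comp]
  rfl

lemma H1QMap_one {A B : Type*} [Group A] [Group B] : H1QMap (1 : A →* B) = 0 := by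
  have h : Abelianization.map (1 : A →* B) = 1 := Abelianization.hom_ext _ _ rfl
  unfold H1QMap
  rw [h]
  exact LinearMap.lTensor_zero ℚ

lemma H1QMap_eq_zero_of_comp_eq_one {A B C : Type*} [Group A] [Group B] [Group C]
    {f : B →* C} {g : A →* B} (hfg : f.comp g = 1) (hf : Function.Injective (H1QMap f)) :
    H1QMap g = 0 := by
  have h : (H1QMap f).comp (H1QMap g) = (H1QMap f).comp (0 : H1Q A →ₗ[ℤ] H1Q B) := by
    rw [← H1QMap_comp, hfg, H1QMap_one, LinearMap.comp_zero]
  exact (LinearMap.cancel_left hf).mp h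

lemma QuotientGroup.subgroupMap_comp_inclusion_eq_one {G : Type*} [Group G] {K H : Subgroup G}
    [K.Normal] (hKH : K ≤ H) :
    ((QuotientGroup.mk' K).subgroupMap H).comp (Subgroup.inclusion hKH) = 1 := by
  ext k
  exact (QuotientGroup.eq_one_iff _).mpr k.2

theorem stmt16_general {G : Type*} [Group G] (K : Subgroup G) [K.Normal]
    (hne : H1QMap K.subtype ≠ 0)
    (H : Subgroup G) (hKH : K ≤ H) :
    ¬ Function.Injective (H1QMap ((QuotientGroup.mk' K).subgroupMap H)) := by
  intro hinj
  have hK : H1QMap (Subgroup.inclusion hKH) = 0 :=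
    H1QMap_eq_zero_of_comp_eq_one (QuotientGroup.subgroupMap_comp_inclusion_eq_one hKH) hinj
  apply hne
  rw [← Subgroup.subtype_comp_inclusion hKH, H1QMap_comp, hK, LinearMap.comp_zero]

/-- Let `G` be a group with normal subgroup `K` and quotient `Γ = G/K`. Suppose the image
of `H₁(K;ℚ)` in `H₁(G;ℚ)` is nonzero. Then for any finite index normal subgroup `H ⊴ G`
containing `K`, the kernel of the induced map `H₁(H;ℚ) → H₁(H/K;ℚ)` is nonzero (where
`H/K` is realized as the image of `H` in `G/K`). -/
theorem stmt16 {G : Type*} [Group G] (K : Subgroup G) [K.Normal]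
    (hne : H1QMap K.subtype ≠ 0)
    (H : Subgroup G) [H.Normal] [H.FiniteIndex] (hKH : K ≤ H) :
    ¬ Function.Injective (H1QMap ((QuotientGroup.mk' K).subgroupMap H)) :=
  stmt16_general K hne H hKH
end
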